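/- arXiv:2204.01371 — 8 statements merged into one kernel-verified Lean document; each statement's English description precedes it below -/
import Mathlib

section
/- Let (α̂, β̂, ε̂⁺, ε̂⁻) be a CQR-feasible tuple that minimizes the CQR objective L(ε⁺, ε⁻) = τ Σ_{i=1}^n ε_i⁺ + (1−τ) Σ_{i=1}^n ε_i⁻ over all CQR-feasible tuples. Then the number n_τ⁺ of indices i with ε̂_i⁺ > 0 satisfies n_τ⁺ ≤ (1−τ)·n. -/
open Finset

open scoped Classical

/-- A tuple (α, β, ε⁺, ε⁻) is CQR-feasible for data {(x i, y i)}: regression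
equations, Afriat concavity constraints, nonnegative subgradients, and
nonnegative error parts. -/
def CQRFeasible {n d : ℕ} (x : Fin n → Fin d → ℝ) (y : Fin n → ℝ)
    (α : Fin n → ℝ) (β : Fin n → Fin d → ℝ) (εp εm : Fin n → ℝ) : Prop :=
  (∀ i, y i = α i + (∑ k, β i k * x i k) + εp i - εm i) ∧
  (∀ i h, α i + ∑ k, β i k * x i k ≤ α h + ∑ k, β h k * x i k) ∧
  (∀ i k, 0 ≤ β i k) ∧ (∀ i, 0 ≤ εp i) ∧ (∀ i, 0 ≤ εm i)

/-- CQR objective L(ε⁺, ε⁻) = τ Σ ε_i⁺ + (1 − τ) Σ ε_i⁻. -/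
def CQRLoss {n : ℕ} (τ : ℝ) (εp εm : Fin n → ℝ) : ℝ :=
  τ * ∑ i, εp i + (1 - τ) * ∑ i, εm i

/-- pCQR objective: CQR loss plus γ Σ ‖β_i‖₂². -/
def pCQRObj {n d : ℕ} (τ γ : ℝ) (β : Fin n → Fin d → ℝ) (εp εm : Fin n → ℝ) : ℝ :=
  CQRLoss τ εp εm + γ * ∑ i, ∑ k, (β i k) ^ 2

theorem cqr_quantile_property_pos {n d : ℕ} (x : Fin n → Fin d → ℝ) (y : Fin n → ℝ)
    (τ : ℝ) (hτ : τ ∈ Set.Ioo (0 : ℝ) 1)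
    (α : Fin n → ℝ) (β : Fin n → Fin d → ℝ) (εp εm : Fin n → ℝ)
    (hfeas : CQRFeasible x y α β εp εm)
    (hmin : ∀ α' : Fin n → ℝ, ∀ β' : Fin n → Fin d → ℝ, ∀ εp' εm' : Fin n → ℝ,
      CQRFeasible x y α' β' εp' εm' → CQRLoss τ εp εm ≤ CQRLoss τ εp' εm') :
    (({i | 0 < εp i} : Set (Fin n)).ncard : ℝ) ≤ (1 - τ) * n := by
  obtain ⟨hτ0, hτ1⟩ := hτ
  obtain ⟨heq, hafr, hβ, hεp, hεm⟩ := hfeas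
  set S : Finset (Fin n) := Finset.univ.filter (fun i => 0 < εp i) with hS
  have hset : ({i | 0 < εp i} : Set (Fin n)) = ↑S := by ext i; simp [hS]
  rw [hset, Set.ncard_coe_finset]
  rcases S.eq_empty_or_nonempty with hSe | hSne
  · simp [hSe]
    exact mul_nonneg (by linarith) (Nat.cast_nonneg n)
  · set t : ℝ := S.inf' hSne εp with ht
    have htpos : 0 < t := by
      rw [ht, Finset.lt_inf'_iff]
      intro i hi
      simpa [hS] using hi
    have htle : ∀ i ∈ S, t ≤ εp i := fun i hi => Finset.inf'_le _ hi
    set εp' : Fin n → ℝ := fun i => εp i - (if 0 < εp i then t else 0) with hεp'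
    set εm' : Fin n → ℝ := fun i => εm i + (if 0 < εp i then 0 else t) with hεm'
    have hfeas' : CQRFeasible x y (fun i => α i + t) β εp' εm' := by
      refine ⟨?_, ?_, hβ, ?_, ?_⟩
      · intro i
        by_cases hp : 0 < εp i <;> simp [hεp', hεm', hp, heq i] <;> ring
      · intro i h; have := hafr i h; dsimp only; linarith
      · intro i
        by_cases hp : 0 < εp i
        · have := htle i (by simp [hS, hp])
          simp [hεp', hp]; linarith
        · simp [hεp', hp, hεp i]
      · intro i
        by_cases hp : 0 < εp i <;> simp [hεm', hp, hεm i] <;> linarith [hεm i, htpos.le]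
    have hle := hmin _ _ _ _ hfeas'
    set T : Finset (Fin n) := Finset.univ.filter (fun i => ¬ 0 < εp i) with hT
    have hnat : S.card + T.card = n := by
      have := Finset.card_filter_add_card_filter_not
        (s := (Finset.univ : Finset (Fin n))) (p := fun i => 0 < εp i)
      simpa [hS, hT] using this
    have hsum1 : ∑ i, εp' i = (∑ i, εp i) - S.card * t := by
      simp only [hεp', Finset.sum_sub_distrib]
      congr 1
      rw [Finset.sum_ite, Finset.sum_const, Finset.sum_const]
      simp [hS, mul_comm]
    have hsum2 : ∑ i, εm' i = (∑ i, εm i) + T.card * t := by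
      simp only [hεm', Finset.sum_add_distrib]
      congr 1
      rw [Finset.sum_ite, Finset.sum_const, Finset.sum_const]
      simp [hT, mul_comm]
    rw [CQRLoss, CQRLoss, hsum1, hsum2] at hle
    have hn : (S.card : ℝ) + T.card = n := by exact_mod_cast hnat
    have hT0 : (0:ℝ) ≤ T.card := Nat.cast_nonneg _
    have hS0 : (0:ℝ) ≤ S.card := Nat.cast_nonneg _
    have h1 : τ * ((S.card : ℝ) * t) ≤ (1 - τ) * ((T.card : ℝ) * t) := by nlinarith [hle]
    have h2 : (S.card : ℝ) * t ≤ (1 - τ) * n * t := by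
      have hn' : (n : ℝ) = (S.card : ℝ) + T.card := hn.symm
      rw [hn']
      nlinarith [h1, mul_nonneg hS0 htpos.le, mul_nonneg hT0 htpos.le]
    exact le_of_mul_le_mul_right h2 htpos
end

section
/- Let (α̂, β̂, ε̂⁺, ε̂⁻) be a CQR-feasible tuple that minimizes the CQR objective L(ε⁺, ε⁻) = τ Σ_{i=1}^n ε_i⁺ + (1−τ) Σ_{i=1}^n ε_i⁻ over all CQR-feasible tuples. Then the number n_τ⁻ of indices i with ε̂_i⁻ > 0 satisfies n_τ⁻ ≤ τ·n. -/
open Finset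

open scoped Classical

theorem cqr_quantile_property_neg {n d : ℕ} (x : Fin n → Fin d → ℝ) (y : Fin n → ℝ)
    (τ : ℝ) (hτ : τ ∈ Set.Ioo (0 : ℝ) 1)
    (α : Fin n → ℝ) (β : Fin n → Fin d → ℝ) (εp εm : Fin n → ℝ)
    (hfeas : CQRFeasible x y α β εp εm)
    (hmin : ∀ α' : Fin n → ℝ, ∀ β' : Fin n → Fin d → ℝ, ∀ εp' εm' : Fin n → ℝ,
      CQRFeasible x y α' β' εp' εm' → CQRLoss τ εp εm ≤ CQRLoss τ εp' εm') :
    (({i | 0 < εm i} : Set (Fin n)).ncard : ℝ) ≤ τ * n := by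
  obtain ⟨hτ0, hτ1⟩ := hτ
  obtain ⟨hy, hafr, hβ, hεp, hεm⟩ := hfeas
  set S : Finset (Fin n) := univ.filter (fun i => 0 < εm i) with hS
  have hcard : ({i | 0 < εm i} : Set (Fin n)).ncard = S.card := by
    rw [Set.ncard_eq_toFinset_card']
    congr 1
    ext i
    simp [hS]
  rw [hcard]
  by_cases hSe : S.Nonempty
  · set δ := S.inf' hSe εm with hδ
    have hδle : ∀ i ∈ S, δ ≤ εm i := fun i hi => Finset.inf'_le _ hi
    have hδpos : 0 < δ := by
      rw [hδ, Finset.lt_inf'_iff]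
      intro i hi
      simpa [hS] using hi
    set εp' : Fin n → ℝ := fun i => if 0 < εm i then εp i else εp i + δ with hεp'
    set εm' : Fin n → ℝ := fun i => if 0 < εm i then εm i - δ else 0 with hεm'
    set α' : Fin n → ℝ := fun i => α i - δ with hα'
    have hfeas' : CQRFeasible x y α' β εp' εm' := by
      refine ⟨?_, ?_, hβ, ?_, ?_⟩
      · intro i
        by_cases hi : 0 < εm i
        · simp only [hεp', hεm', hα', if_pos hi]
          have := hy i; ring_nf; linarith [hy i]
        · have h0 : εm i = 0 := le_antisymm (not_lt.1 hi) (hεm i)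
          simp only [hεp', hεm', hα', if_neg hi]
          have := hy i
          rw [h0] at this
          linarith
      · intro i h
        simp only [hα']
        linarith [hafr i h]
      · intro i
        by_cases hi : 0 < εm i
        · simp only [hεp', if_pos hi]; exact hεp i
        · simp only [hεp', if_neg hi]; linarith [hεp i]
      · intro i
        by_cases hi : 0 < εm i
        · simp only [hεm', if_pos hi]
          have : δ ≤ εm i := hδle i (by simp [hS, hi])
          linarith
        · simp only [hεm', if_neg hi]; exact le_refl 0
    have hloss := hmin α' β εp' εm' hfeas'
    have hsum_p : ∑ i, εp' i = ∑ i, εp i + δ * (univ.filter (fun i => ¬ 0 < εm i)).card := by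
      have : ∀ i ∈ (univ : Finset (Fin n)), εp' i = εp i + (if 0 < εm i then 0 else δ) := by
        intro i _
        by_cases hi : 0 < εm i <;> simp [hεp', hi]
      rw [Finset.sum_congr rfl this, Finset.sum_add_distrib, Finset.sum_ite, Finset.sum_const,
        Finset.sum_const]
      push_cast
      ring
    have hsum_m : ∑ i, εm' i = ∑ i, εm i - δ * S.card := by
      have : ∀ i ∈ (univ : Finset (Fin n)), εm' i = εm i - (if 0 < εm i then δ else 0) := by
        intro i _
        by_cases hi : 0 < εm i
        · simp [hεm', hi]
        · have h0 : εm i = 0 := le_antisymm (not_lt.1 hi) (hεm i)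
          simp [hεm', hi, h0]
      rw [Finset.sum_congr rfl this, Finset.sum_sub_distrib, Finset.sum_ite, Finset.sum_const,
        Finset.sum_const, hS]
      push_cast
      ring
    have hcards : (S.card : ℝ) + (univ.filter (fun i => ¬ 0 < εm i)).card = n := by
      have := Finset.card_filter_add_card_filter_not
        (s := (univ : Finset (Fin n))) (p := fun i => 0 < εm i)
      rw [hS, ← Nat.cast_add, this, Finset.card_univ, Fintype.card_fin]
    rw [CQRLoss, CQRLoss, hsum_p, hsum_m] at hloss
    set m : ℝ := (S.card : ℝ)
    set c : ℝ := ((univ.filter (fun i => ¬ 0 < εm i)).card : ℝ)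
    have key : (1 - τ) * m ≤ τ * c := by nlinarith
    nlinarith
  · have : S.card = 0 := by
      simp [Finset.not_nonempty_iff_eq_empty.1 hSe]
    rw [this]
    push_cast
    positivity
end

section
/- Fix γ ≥ 0, and let (α̂, β̂, ε̂⁺, ε̂⁻) be a CQR-feasible tuple that minimizes the pCQR objective L(ε⁺, ε⁻) + γ Σ_{i=1}^n ‖β_i‖₂² over all CQR-feasible tuples. Then the number of indices i with ε̂_i⁺ > 0 is at most (1−τ)·n. -/
open Finset

open scoped Classical

theorem pcqr_quantile_property_pos {n d : ℕ} (x : Fin n → Fin d → ℝ) (y : Fin n → ℝ)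
    (τ : ℝ) (hτ : τ ∈ Set.Ioo (0 : ℝ) 1) (γ : ℝ) (hγ : 0 ≤ γ)
    (α : Fin n → ℝ) (β : Fin n → Fin d → ℝ) (εp εm : Fin n → ℝ)
    (hfeas : CQRFeasible x y α β εp εm)
    (hmin : ∀ α' : Fin n → ℝ, ∀ β' : Fin n → Fin d → ℝ, ∀ εp' εm' : Fin n → ℝ,
      CQRFeasible x y α' β' εp' εm' → pCQRObj τ γ β εp εm ≤ pCQRObj τ γ β' εp' εm') :
    (({i | 0 < εp i} : Set (Fin n)).ncard : ℝ) ≤ (1 - τ) * n := by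
  obtain ⟨hτ0, hτ1⟩ := hτ
  obtain ⟨heq, hafr, hβ, hεp, hεm⟩ := hfeas
  set s : Finset (Fin n) := Finset.univ.filter (fun i => 0 < εp i) with hs
  have hset : ({i | 0 < εp i} : Set (Fin n)) = ↑s := by
    ext i; simp [hs]
  rw [hset, Set.ncard_coe_finset]
  by_cases hne : s.Nonempty
  · set t : ℝ := s.inf' hne εp with ht
    have htpos : 0 < t := by
      rw [ht, Finset.lt_inf'_iff]
      intro i hi
      simpa [hs] using hi
    have htle : ∀ i ∈ s, t ≤ εp i := fun i hi => Finset.inf'_le _ hi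
    set εp' : Fin n → ℝ := fun i => εp i - (if i ∈ s then t else 0) with hεp'
    set εm' : Fin n → ℝ := fun i => εm i + (if i ∈ s then 0 else t) with hεm'
    have hfeas' : CQRFeasible x y (fun i => α i + t) β εp' εm' := by
      refine ⟨?_, ?_, hβ, ?_, ?_⟩
      · intro i
        by_cases hi : i ∈ s
        · simp only [hεp', hεm', hi, if_pos]
          rw [heq i]; ring
        · have h0 : εp i = 0 := by
            by_contra h
            exact hi (by simp [hs, lt_of_le_of_ne (hεp i) (Ne.symm h)])
          simp only [hεp', hεm', hi, if_neg, if_false]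
          rw [heq i, h0]; ring
      · intro i h
        have := hafr i h
        dsimp only
        linarith
      · intro i
        by_cases hi : i ∈ s
        · simp only [hεp', hi, if_pos]
          linarith [htle i hi]
        · simp only [hεp', hi, if_neg, if_false]
          linarith [hεp i]
      · intro i
        by_cases hi : i ∈ s <;> simp only [hεm', hi, if_pos, if_neg, if_false] <;>
          [linarith [hεm i]; linarith [hεm i]]
    have hle := hmin _ _ _ _ hfeas'
    have hsum1 : ∑ i, εp' i = (∑ i, εp i) - s.card * t := by
      simp only [hεp', Finset.sum_sub_distrib]
      congr 1
      rw [Finset.sum_ite_mem, Finset.univ_inter, Finset.sum_const, nsmul_eq_mul]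
    have hsum2 : ∑ i, εm' i = (∑ i, εm i) + (n - s.card) * t := by
      simp only [hεm', Finset.sum_add_distrib]
      congr 1
      have : ∑ i : Fin n, (if i ∈ s then (0:ℝ) else t)
          = ∑ i : Fin n, (t - if i ∈ s then t else 0) := by
        apply Finset.sum_congr rfl
        intro i _
        by_cases hi : i ∈ s <;> simp [hi]
      rw [this, Finset.sum_sub_distrib, Finset.sum_const,
        Finset.sum_ite_mem, Finset.univ_inter, Finset.sum_const]
      simp [nsmul_eq_mul]
      ring
    simp only [pCQRObj, CQRLoss, hsum1, hsum2] at hle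
    have hc0 : (0:ℝ) ≤ (s.card : ℝ) := by positivity
    nlinarith [hle, htpos, hτ0, hτ1]
  · rw [Finset.not_nonempty_iff_eq_empty] at hne
    rw [hne]
    simp
    have hn : (0:ℝ) ≤ n := Nat.cast_nonneg n
    nlinarith
end

section
/- Fix γ ≥ 0, and let (α̂, β̂, ε̂⁺, ε̂⁻) be a CQR-feasible tuple that minimizes the pCQR objective L(ε⁺, ε⁻) + γ Σ_{i=1}^n ‖β_i‖₂² over all CQR-feasible tuples. Then the number of indices i with ε̂_i⁻ > 0 is at most τ·n. -/
open Finset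

open scoped Classical

theorem pcqr_quantile_property_neg {n d : ℕ} (x : Fin n → Fin d → ℝ) (y : Fin n → ℝ)
    (τ : ℝ) (hτ : τ ∈ Set.Ioo (0 : ℝ) 1) (γ : ℝ) (hγ : 0 ≤ γ)
    (α : Fin n → ℝ) (β : Fin n → Fin d → ℝ) (εp εm : Fin n → ℝ)
    (hfeas : CQRFeasible x y α β εp εm)
    (hmin : ∀ α' : Fin n → ℝ, ∀ β' : Fin n → Fin d → ℝ, ∀ εp' εm' : Fin n → ℝ,
      CQRFeasible x y α' β' εp' εm' → pCQRObj τ γ β εp εm ≤ pCQRObj τ γ β' εp' εm') :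
    (({i | 0 < εm i} : Set (Fin n)).ncard : ℝ) ≤ τ * n := by

  obtain ⟨hτ0, hτ1⟩ := hτ
  classical
  set S : Finset (Fin n) := Finset.univ.filter (fun i => 0 < εm i) with hS
  have hset : {i | 0 < εm i} = ↑S := by ext i; simp [hS]
  rw [hset, Set.ncard_coe_finset]
  rcases S.eq_empty_or_nonempty with hemp | hne
  · simp only [hemp, Finset.card_empty, Nat.cast_zero]
    positivity
  · set t : ℝ := S.inf' hne εm with ht
    have ht0 : 0 < t := by
      rw [ht, Finset.lt_inf'_iff]
      intro i hi
      simpa [hS] using hi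
    have hle : ∀ i ∈ S, t ≤ εm i := fun i hi => Finset.inf'_le _ hi
    obtain ⟨heq, hafr, hβ, hεp, hεm⟩ := hfeas
    set εp' : Fin n → ℝ := fun i => if 0 < εm i then εp i else εp i + t with hεp'
    set εm' : Fin n → ℝ := fun i => if 0 < εm i then εm i - t else εm i with hεm'
    have hfeas' : CQRFeasible x y (fun i => α i - t) β εp' εm' := by
      refine ⟨?_, ?_, hβ, ?_, ?_⟩
      · intro i
        by_cases hi : 0 < εm i <;>
          simp only [hεp', hεm', if_pos, if_neg, hi, ite_true, ite_false] <;>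
          rw [heq i] <;> ring
      · intro i h'
        have := hafr i h'
        simp only []
        linarith
      · intro i
        by_cases hi : 0 < εm i <;> simp only [hεp', hi, ite_true, ite_false] <;>
          nlinarith [hεp i]
      · intro i
        by_cases hi : 0 < εm i
        · have := hle i (by simp [hS, hi])
          simp only [hεm', hi, ite_true]
          linarith
        · simpa [hεm', hi] using hεm i
    have hobj := hmin _ _ _ _ hfeas'
    set Sc : Finset (Fin n) := Finset.univ.filter (fun i => ¬ 0 < εm i) with hSc
    have hcard : (S.card : ℝ) + (Sc.card : ℝ) = n := by
      have := Finset.card_filter_add_card_filter_not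
        (s := (Finset.univ : Finset (Fin n))) (p := fun i => 0 < εm i)
      rw [Finset.card_univ, Fintype.card_fin] at this
      exact_mod_cast this
    have hsum_p : ∑ i, εp' i = (∑ i, εp i) + (Sc.card : ℝ) * t := by
      have h1 : ∀ i, εp' i = εp i + (if 0 < εm i then 0 else t) := by
        intro i; by_cases hi : 0 < εm i <;> simp [hεp', hi]
      simp only [h1]
      rw [Finset.sum_add_distrib, Finset.sum_ite, Finset.sum_const, Finset.sum_const]
      simp [hSc, mul_comm]
    have hsum_m : ∑ i, εm' i = (∑ i, εm i) - (S.card : ℝ) * t := by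
      have h1 : ∀ i, εm' i = εm i - (if 0 < εm i then t else 0) := by
        intro i; by_cases hi : 0 < εm i <;> simp [hεm', hi]
      simp only [h1]
      rw [Finset.sum_sub_distrib, Finset.sum_ite, Finset.sum_const, Finset.sum_const]
      simp [hS, mul_comm]
    rw [pCQRObj, pCQRObj, CQRLoss, CQRLoss, hsum_p, hsum_m] at hobj
    have key : 0 ≤ t * (τ * n - S.card) := by
      have h2 : (n : ℝ) = (S.card : ℝ) + (Sc.card : ℝ) := hcard.symm
      rw [h2]
      nlinarith [hobj]
    nlinarith [key, ht0]
end

section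
/- Let (α, β, ε⁺, ε⁻) be a CQR-feasible tuple with min(ε_i⁺, ε_i⁻) = 0 for all i, and let n⁺ be the number of indices i with ε_i⁺ > 0. Suppose 0 < δ ≤ ε_i⁺ for every i with ε_i⁺ > 0. Define the upward-shifted tuple α'_i = α_i + δ, β'_i = β_i, ε'_i⁺ = max(ε_i⁺ − δ, 0), ε'_i⁻ = ε_i⁻ + δ·1{ε_i⁺ = 0}. Then (α', β', ε'⁺, ε'⁻) is CQR-feasible and L(ε'⁺, ε'⁻) = L(ε⁺, ε⁻) + δ·((1−τ)·n − n⁺). In particular, if n⁺ > (1−τ)·n then the shifted tuple has strictly smaller CQR objective. -/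
open Finset

open scoped Classical

theorem upward_shift_loss {n d : ℕ} (x : Fin n → Fin d → ℝ) (y : Fin n → ℝ)
    (τ : ℝ) (hτ : τ ∈ Set.Ioo (0 : ℝ) 1)
    (α : Fin n → ℝ) (β : Fin n → Fin d → ℝ) (εp εm : Fin n → ℝ)
    (hfeas : CQRFeasible x y α β εp εm)
    (hcomp : ∀ i, min (εp i) (εm i) = 0)
    (δ : ℝ) (hδpos : 0 < δ) (hδle : ∀ i, 0 < εp i → δ ≤ εp i) :
    CQRFeasible x y (fun i => α i + δ) β
      (fun i => max (εp i - δ) 0)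
      (fun i => εm i + if εp i = 0 then δ else 0) ∧
    CQRLoss τ (fun i => max (εp i - δ) 0) (fun i => εm i + if εp i = 0 then δ else 0)
      = CQRLoss τ εp εm
        + δ * ((1 - τ) * n - (({i | 0 < εp i} : Set (Fin n)).ncard : ℝ)) ∧
    ((1 - τ) * n < (({i | 0 < εp i} : Set (Fin n)).ncard : ℝ) →
      CQRLoss τ (fun i => max (εp i - δ) 0) (fun i => εm i + if εp i = 0 then δ else 0)
        < CQRLoss τ εp εm) := by

  obtain ⟨heq, hafr, hβ, hεp, hεm⟩ := hfeas
  have hpos : ∀ i, εp i ≠ 0 → 0 < εp i := fun i hi => lt_of_le_of_ne (hεp i) (Ne.symm hi)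
  -- pointwise identities
  have h1 : ∀ i, max (εp i - δ) 0 = εp i - δ * (if 0 < εp i then 1 else 0) := by
    intro i
    by_cases h : 0 < εp i
    · have := hδle i h
      simp [h, max_eq_left, sub_nonneg.mpr this]
    · have : εp i = 0 := le_antisymm (not_lt.mp h) (hεp i)
      simp [h, this, hδpos.le]
  have h2 : ∀ i, εm i + (if εp i = 0 then δ else 0)
      = εm i + δ * (1 - if 0 < εp i then 1 else 0) := by
    intro i
    by_cases h : εp i = 0
    · simp [h]
    · simp [h, hpos i h]
  set S : Finset (Fin n) := Finset.univ.filter (fun i => 0 < εp i) with hS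
  have hCard : (({i | 0 < εp i} : Set (Fin n)).ncard : ℝ) = (S.card : ℝ) := by
    have : ({i | 0 < εp i} : Set (Fin n)) = ↑S := by ext i; simp [hS]
    rw [this, Set.ncard_coe_finset]
  have hsum : ∑ i, (if 0 < εp i then (1:ℝ) else 0) = (S.card : ℝ) := by
    rw [Finset.sum_boole]
  have hloss : CQRLoss τ (fun i => max (εp i - δ) 0)
      (fun i => εm i + if εp i = 0 then δ else 0)
      = CQRLoss τ εp εm + δ * ((1 - τ) * n - (S.card : ℝ)) := by
    unfold CQRLoss
    have e1 : ∑ i, max (εp i - δ) 0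
        = ∑ i, εp i - δ * (S.card : ℝ) := by
      rw [← hsum]
      rw [Finset.mul_sum, ← Finset.sum_sub_distrib]
      exact Finset.sum_congr rfl fun i _ => h1 i
    have e2 : ∑ i, (εm i + if εp i = 0 then δ else 0)
        = ∑ i, εm i + δ * ((n : ℝ) - (S.card : ℝ)) := by
      have : ∑ i, (εm i + if εp i = 0 then δ else 0)
          = ∑ i, (εm i + δ * (1 - if 0 < εp i then 1 else 0)) :=
        Finset.sum_congr rfl fun i _ => h2 i
      rw [this, Finset.sum_add_distrib, ← Finset.mul_sum, Finset.sum_sub_distrib,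
        hsum, Finset.sum_const, Finset.card_univ, Fintype.card_fin, nsmul_eq_mul,
        mul_one]
    rw [e1, e2]; ring
  refine ⟨⟨?_, ?_, hβ, fun i => le_max_right _ _, ?_⟩, ?_, ?_⟩
  · intro i
    have hy := heq i
    dsimp only
    by_cases h : εp i = 0
    · rw [if_pos h, h, zero_sub, max_eq_right (by linarith : -δ ≤ (0:ℝ))]
      linarith
    · have hp := hpos i h
      have hle := hδle i hp
      rw [if_neg h, max_eq_left (sub_nonneg.mpr hle)]
      linarith
  · intro i h
    dsimp only
    linarith [hafr i h]
  · intro i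
    have := hεm i
    dsimp only
    split_ifs <;> linarith
  · rw [hloss, hCard]
  · intro hlt
    rw [hloss]
    rw [hCard] at hlt
    nlinarith
end

section
/- Let (α, β, ε⁺, ε⁻) be a CQR-feasible tuple with min(ε_i⁺, ε_i⁻) = 0 for all i, and let n⁻ be the number of indices i with ε_i⁻ > 0. Suppose 0 < δ ≤ ε_i⁻ for every i with ε_i⁻ > 0. Define the downward-shifted tuple α'_i = α_i − δ, β'_i = β_i, ε'_i⁺ = ε_i⁺ + δ·1{ε_i⁻ = 0}, ε'_i⁻ = max(ε_i⁻ − δ, 0). Then (α', β', ε'⁺, ε'⁻) is CQR-feasible and L(ε'⁺, ε'⁻) = L(ε⁺, ε⁻) + δ·(τ·n − n⁻). In particular, if n⁻ > τ·n then the shifted tuple has strictly smaller CQR objective. -/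
open Finset

open scoped Classical

theorem downward_shift_loss {n d : ℕ} (x : Fin n → Fin d → ℝ) (y : Fin n → ℝ)
    (τ : ℝ) (hτ : τ ∈ Set.Ioo (0 : ℝ) 1)
    (α : Fin n → ℝ) (β : Fin n → Fin d → ℝ) (εp εm : Fin n → ℝ)
    (hfeas : CQRFeasible x y α β εp εm)
    (hcomp : ∀ i, min (εp i) (εm i) = 0)
    (δ : ℝ) (hδpos : 0 < δ) (hδle : ∀ i, 0 < εm i → δ ≤ εm i) :
    CQRFeasible x y (fun i => α i - δ) β
      (fun i => εp i + if εm i = 0 then δ else 0)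
      (fun i => max (εm i - δ) 0) ∧
    CQRLoss τ (fun i => εp i + if εm i = 0 then δ else 0) (fun i => max (εm i - δ) 0)
      = CQRLoss τ εp εm
        + δ * (τ * n - (({i | 0 < εm i} : Set (Fin n)).ncard : ℝ)) ∧
    (τ * n < (({i | 0 < εm i} : Set (Fin n)).ncard : ℝ) →
      CQRLoss τ (fun i => εp i + if εm i = 0 then δ else 0) (fun i => max (εm i - δ) 0)
        < CQRLoss τ εp εm) := by

  obtain ⟨heq, haf, hβ, hεp, hεm⟩ := hfeas
  obtain ⟨hτ0, hτ1⟩ := hτ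
  set S : Finset (Fin n) := Finset.univ.filter (fun i => 0 < εm i) with hS
  have hcard : (({i | 0 < εm i} : Set (Fin n)).ncard : ℝ) = (S.card : ℝ) := by
    have : ({i | 0 < εm i} : Set (Fin n)) = ↑S := by ext i; simp [hS]
    rw [this, Set.ncard_coe_finset]
  have hdich : ∀ i, εm i = 0 ∨ 0 < εm i := fun i => (hεm i).eq_or_lt.imp Eq.symm id
  have hmax : ∀ i, max (εm i - δ) 0 = εm i - (if 0 < εm i then δ else 0) := by
    intro i
    rcases hdich i with h | h
    · rw [if_neg (by rw [h]; exact lt_irrefl 0), h]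
      rw [max_eq_right (by linarith)]; ring
    · rw [if_pos h, max_eq_left (by linarith [hδle i h])]
  have hite : ∀ i, (if εm i = 0 then δ else 0) = δ - (if 0 < εm i then δ else 0) := by
    intro i
    rcases hdich i with h | h
    · rw [if_pos h, if_neg (by rw [h]; exact lt_irrefl 0)]; ring
    · rw [if_neg (by linarith), if_pos h]; ring
  have hsum1 : ∑ i, (if 0 < εm i then δ else (0:ℝ)) = S.card * δ := by
    rw [← Finset.sum_filter, ← hS, Finset.sum_const, nsmul_eq_mul]
  have hloss : CQRLoss τ (fun i => εp i + if εm i = 0 then δ else 0)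
      (fun i => max (εm i - δ) 0)
      = CQRLoss τ εp εm + δ * (τ * n - (({i | 0 < εm i} : Set (Fin n)).ncard : ℝ)) := by
    rw [hcard]
    unfold CQRLoss
    have h1 : ∑ i, (εp i + if εm i = 0 then δ else 0)
        = ∑ i, εp i + ((n : ℝ) * δ - S.card * δ) := by
      rw [Finset.sum_add_distrib]
      congr 1
      simp only [hite]
      rw [Finset.sum_sub_distrib, hsum1, Finset.sum_const, nsmul_eq_mul,
        Finset.card_univ, Fintype.card_fin]
    have h2 : ∑ i, max (εm i - δ) 0 = ∑ i, εm i - S.card * δ := by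
      simp only [hmax]
      rw [Finset.sum_sub_distrib, hsum1]
    rw [h1, h2]; ring
  refine ⟨⟨fun i => by dsimp only; rw [heq i, hmax i, hite i]; ring,
    fun i h => by have := haf i h; simp only []; linarith,
    hβ,
    fun i => by have := hεp i; dsimp only; split_ifs <;> linarith,
    fun i => le_max_right _ _⟩, hloss, fun h => by rw [hloss]; nlinarith⟩
end

section
/- Fix γ > 0 and let (α̂, β̂, ε̂⁺, ε̂⁻) be a CQR-feasible tuple minimizing the pCQR objective L(ε⁺, ε⁻) + γ Σ_{i=1}^n ‖β_i‖₂² over all CQR-feasible tuples. Then for every c ∈ ℝ, γ Σ_{i=1}^n ‖β̂_i‖₂² ≤ τ Σ_{i=1}^n max(y_i − c, 0) + (1−τ) Σ_{i=1}^n max(c − y_i, 0). Consequently, Σ_{i=1}^n ‖β̂_i‖₂² ≤ V₀/γ where V₀ = inf_{c∈ℝ} [τ Σ_i max(y_i − c, 0) + (1−τ) Σ_i max(c − y_i, 0)], so the optimal subgradients tend to 0 as γ → ∞. -/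
open Finset

open scoped Classical

theorem pcqr_penalty_bound {n d : ℕ} (x : Fin n → Fin d → ℝ) (y : Fin n → ℝ)
    (τ : ℝ) (hτ : τ ∈ Set.Ioo (0 : ℝ) 1) (γ : ℝ) (hγ : 0 < γ)
    (α : Fin n → ℝ) (β : Fin n → Fin d → ℝ) (εp εm : Fin n → ℝ)
    (hfeas : CQRFeasible x y α β εp εm)
    (hmin : ∀ α' : Fin n → ℝ, ∀ β' : Fin n → Fin d → ℝ, ∀ εp' εm' : Fin n → ℝ,
      CQRFeasible x y α' β' εp' εm' → pCQRObj τ γ β εp εm ≤ pCQRObj τ γ β' εp' εm') :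
    (∀ c : ℝ, γ * ∑ i, ∑ k, (β i k) ^ 2
        ≤ τ * ∑ i, max (y i - c) 0 + (1 - τ) * ∑ i, max (c - y i) 0) ∧
    ∑ i, ∑ k, (β i k) ^ 2
      ≤ (⨅ c : ℝ, (τ * ∑ i, max (y i - c) 0 + (1 - τ) * ∑ i, max (c - y i) 0)) / γ := by
  obtain ⟨hτ0, hτ1⟩ := hτ
  have key : ∀ c : ℝ, γ * ∑ i, ∑ k, (β i k) ^ 2
      ≤ τ * ∑ i, max (y i - c) 0 + (1 - τ) * ∑ i, max (c - y i) 0 := by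
    intro c
    have hfeas' : CQRFeasible x y (fun _ => c) (fun _ _ => 0)
        (fun i => max (y i - c) 0) (fun i => max (c - y i) 0) := by
      refine ⟨fun i => ?_, fun i h => by simp, fun i k => le_refl 0,
        fun i => le_max_right _ _, fun i => le_max_right _ _⟩
      simp only [zero_mul, Finset.sum_const_zero, add_zero]
      rcases le_total (y i) c with h | h
      · rw [max_eq_right (by linarith), max_eq_left (by linarith)]; ring
      · rw [max_eq_left (by linarith), max_eq_right (by linarith)]; ring
    have := hmin _ _ _ _ hfeas'
    have hL0 : 0 ≤ CQRLoss τ εp εm := by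
      have h1 : 0 ≤ ∑ i, εp i := Finset.sum_nonneg fun i _ => hfeas.2.2.2.1 i
      have h2 : 0 ≤ ∑ i, εm i := Finset.sum_nonneg fun i _ => hfeas.2.2.2.2 i
      have := mul_nonneg hτ0.le h1
      have := mul_nonneg (by linarith : (0:ℝ) ≤ 1 - τ) h2
      unfold CQRLoss; linarith
    have hobj : pCQRObj (n := n) (d := d) τ γ (fun _ _ => (0:ℝ)) (fun i => max (y i - c) 0)
        (fun i => max (c - y i) 0)
        = τ * ∑ i, max (y i - c) 0 + (1 - τ) * ∑ i, max (c - y i) 0 := by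
      simp [pCQRObj, CQRLoss]
    calc γ * ∑ i, ∑ k, (β i k) ^ 2 ≤ pCQRObj τ γ β εp εm := by
          unfold pCQRObj; linarith
      _ ≤ _ := this
      _ = _ := hobj
  refine ⟨key, ?_⟩
  rw [le_div_iff₀ hγ]
  rw [mul_comm]
  exact le_ciInf key
end

section
/- Let x_1, …, x_n ∈ ℝ^d, and for two quantile levels indexed by j and j+1 let (α_{·,j}, β_{·,j}) and (α_{·,j+1}, β_{·,j+1}) each satisfy the concavity/Afriat constraints α_{i,j} + β_{i,j}·x_i ≤ α_{h,j} + β_{h,j}·x_i for all i, h (and likewise for j+1). Suppose the sCQR non-crossing constraints hold: α_{i,j} + β_{i,j}·x_i + C_{i,j} ≤ α_{i,j+1} + β_{i,j+1}·x_i for all i, with constants C_{i,j} ≥ 0. Then the fitted quantile functions f̂_j(x) = min_h (α_{h,j} + β_{h,j}·x) and f̂_{j+1}(x) = min_h (α_{h,j+1} + β_{h,j+1}·x) satisfy f̂_j(x_i) + C_{i,j} ≤ f̂_{j+1}(x_i) for every observation i; in particular f̂_j(x_i) ≤ f̂_{j+1}(x_i), so the estimated quantile functions do not cross at the data points. -/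
open Finset

/-- The representor function f̂(x) = min_{h} (α_h + β_h · x). -/
noncomputable def representor {n d : ℕ} (α : Fin n → ℝ) (β : Fin n → Fin d → ℝ)
    (x : Fin d → ℝ) : ℝ :=
  ⨅ h : Fin n, (α h + ∑ k, β h k * x k)

lemma representor_eq_at_data {n d : ℕ} (hn : 0 < n) (x : Fin n → Fin d → ℝ)
    (α : Fin n → ℝ) (β : Fin n → Fin d → ℝ)
    (hafriat : ∀ i h : Fin n,
      α i + ∑ k, β i k * x i k ≤ α h + ∑ k, β h k * x i k) (i : Fin n) :
    representor α β (x i) = α i + ∑ k, β i k * x i k := by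
  haveI : Nonempty (Fin n) := ⟨⟨0, hn⟩⟩
  refine le_antisymm (ciInf_le (Set.Finite.bddBelow (Set.finite_range _)) i)
    (le_ciInf fun h => hafriat i h)

theorem scqr_noncrossing_at_data {n d : ℕ} (hn : 0 < n) (x : Fin n → Fin d → ℝ)
    (αj : Fin n → ℝ) (βj : Fin n → Fin d → ℝ)
    (αj' : Fin n → ℝ) (βj' : Fin n → Fin d → ℝ)
    (C : Fin n → ℝ) (hC : ∀ i, 0 ≤ C i)
    (hafriatj : ∀ i h : Fin n,
      αj i + ∑ k, βj i k * x i k ≤ αj h + ∑ k, βj h k * x i k)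
    (hafriatj' : ∀ i h : Fin n,
      αj' i + ∑ k, βj' i k * x i k ≤ αj' h + ∑ k, βj' h k * x i k)
    (hnc : ∀ i : Fin n,
      αj i + ∑ k, βj i k * x i k + C i ≤ αj' i + ∑ k, βj' i k * x i k) :
    (∀ i : Fin n, representor αj βj (x i) + C i ≤ representor αj' βj' (x i)) ∧
    (∀ i : Fin n, representor αj βj (x i) ≤ representor αj' βj' (x i)) := by
  have key : ∀ i : Fin n, representor αj βj (x i) + C i ≤ representor αj' βj' (x i) := by
    intro i
    rw [representor_eq_at_data hn x αj βj hafriatj i,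
      representor_eq_at_data hn x αj' βj' hafriatj' i]
    exact hnc i
  exact ⟨key, fun i => le_trans (le_add_of_nonneg_right (hC i)) (key i)⟩
end
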